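/- arXiv:2102.12177 — 2 statements merged into one kernel-verified Lean document; each statement's English description precedes it below -/
import Mathlib

section
/- For integers l ≥ 1, s ≥ 2, m ≥ 0, and all integers p, q with 1 ≤ p, q ≤ l+1, one has I_{p,q} = J_{p,q}. -/
open scoped BigOperators

/-- The multiple zeta value of an index `k = (k₁, …, k_r)`:
`ζ(k₁,…,k_r) = Σ_{1 ≤ m₁ < ⋯ < m_r} 1/(m₁^{k₁} ⋯ m_r^{k_r})`,
written as a `tsum` over strictly increasing tuples of positive integers. -/
noncomputable def mzv (k : List ℕ) : ℝ :=
  ∑' f : {f : Fin k.length → ℕ+ // StrictMono f},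
    ∏ i : Fin k.length, (1 : ℝ) / (((f.1 i : ℕ) : ℝ) ^ (k.get i))

/-- Formal ℚ-linear combinations of indices. -/
abbrev IndexSum := List ℕ →₀ ℚ

/-- An index viewed as a formal sum. -/
noncomputable def ofIdx (k : List ℕ) : IndexSum := Finsupp.single k 1

/-- ζ extended ℚ-linearly to formal sums of indices. -/
noncomputable def mzvL (x : IndexSum) : ℝ := x.sum fun k c => (c : ℝ) * mzv k

/-- The Ohno sum `O_m(k) = Σ_{|e| = m} ζ(k ⊕ e)`. -/
noncomputable def ohno (m : ℕ) (k : List ℕ) : ℝ :=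
  ∑ e ∈ Finset.Nat.antidiagonalTuple k.length m,
    mzv (List.ofFn fun i : Fin k.length => k.get i + e i)

/-- The Ohno sum extended ℚ-linearly to formal sums of indices. -/
noncomputable def ohnoL (m : ℕ) (x : IndexSum) : ℝ := x.sum fun k c => (c : ℝ) * ohno m k

/-- The multiset of shuffles of two lists. -/
def shuffles : List ℕ → List ℕ → Multiset (List ℕ)
  | [], l => {l}
  | a :: k, [] => {a :: k}
  | a :: k, b :: l =>
      ((shuffles k (b :: l)).map (a :: ·)) + ((shuffles (a :: k) l).map (b :: ·))
  termination_by k l => k.length + l.length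

/-- The shuffle product of two indices, as a formal sum of indices. -/
noncomputable def shufL (k l : List ℕ) : IndexSum := ((shuffles k l).map ofIdx).sum

/-- The shuffle product, extended ℚ-bilinearly to formal sums of indices. -/
noncomputable def shuf (x y : IndexSum) : IndexSum :=
  x.sum fun k c => y.sum fun l d => (c * d) • shufL k l

/-- Encoding of an index as a binary word: an entry `a` becomes the block
`false, true, …, true` with `a - 1` trues. -/
def encodeIdx (k : List ℕ) : List Bool := k.flatMap fun a => false :: List.replicate (a - 1) true

/-- Auxiliary decoder. -/
def decodeAux : List Bool → ℕ → List ℕ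
  | [], n => [n]
  | false :: w, n => n :: decodeAux w 1
  | true :: w, n => decodeAux w (n + 1)

/-- Decoding of a binary word into an index. -/
def decodeIdx : List Bool → List ℕ
  | [] => []
  | _ :: w => decodeAux w 1

/-- The dual index `k†`: reverse the binary word of `k` and swap the letters. -/
def dualIdx (k : List ℕ) : List ℕ := decodeIdx (((encodeIdx k).reverse).map (fun b => !b))

/-- Duality extended termwise to formal sums of indices. -/
noncomputable def dualL (x : IndexSum) : IndexSum := Finsupp.mapDomain dualIdx x

/-- `(a) ⊛ (l₁,…,l_r) = Σ_{i=1}^{r} (l₁,…,l_{i-1}, l_i + a, l_{i+1},…,l_r)`. -/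
noncomputable def hastIdx (a : ℕ) (l : List ℕ) : IndexSum :=
  ∑ i : Fin l.length, Finsupp.single (l.set i (l.get i + a)) 1

/-- `⊛` extended ℚ-linearly in the second argument. -/
noncomputable def hast (a : ℕ) (x : IndexSum) : IndexSum := x.sum fun l c => c • hastIdx a l

/-- `Σ_{|e| = m} ζ((a) ⊛ (x ⊕ e))`, where for each index occurring in `x` the
sequence `e` of nonnegative integers runs over the suitable depth (the depth of
that index) with entry sum `m`, and `⊕ e` is applied termwise. -/
noncomputable def zetaHastSum (a m : ℕ) (x : IndexSum) : ℝ :=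
  x.sum fun k c => (c : ℝ) *
    ∑ e ∈ Finset.Nat.antidiagonalTuple k.length m,
      mzvL (hastIdx a (List.ofFn fun i : Fin k.length => k.get i + e i))

/-- Appending an entry `a` to each index occurring in a formal sum. -/
noncomputable def appendL (x : IndexSum) (a : ℕ) : IndexSum :=
  Finsupp.mapDomain (fun k => k ++ [a]) x

/-- `F_{m,l}(s; k) = O_m((s) ⧢ k ⧢ ({2}^l)) − O_m((s) ⧢ (k ⧢ ({2}^l))†)`. -/
noncomputable def F (m l s : ℕ) (k : List ℕ) : ℝ :=
  ohnoL m (shuf (ofIdx [s]) (shufL k (List.replicate l 2)))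
    - ohnoL m (shuf (ofIdx [s]) (dualL (shufL k (List.replicate l 2))))

/-- `D_{m,l}(s,t) = F_{m,l}(s;(t+1)) − F_{m,l}(t;(s+1))`. -/
noncomputable def D (m l s t : ℕ) : ℝ := F m l s [t + 1] - F m l t [s + 1]


/-! Both sides are sums of `ζ(b + h)`, where `b = ({2}^{q-1}, 1, {2}^{l-q+2})` and `h` runs over
the compositions of `m + s` into `l + 2` parts, each counted with a weight. On the `J` side, `h` is
`(m_1, …, m_{l+1})` with `m_q` split as `(j, m_q - j)`, and the weight is `max{m_p - s + 1, 0}`.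
On the `I` side, `h` is the Ohno shift `e` plus `s + a` at the position of the large entry, so `h`
is counted once for each `a` with `s + a` below that entry of `h`: again `max{m_p - s + 1, 0}`
times. For `p = q` the three families of `I` together count the integers in `[s - h_{q+1}, h_q]`,
of which there are `max{h_q + h_{q+1} + 1 - s, 0} = max{m_q - s + 1, 0}`.
-/

open Finset Finset.Nat

section Compositions

open scoped Classical

theorem pi_single_le_iff {ι : Type*} [DecidableEq ι] {i : ι} {c : ℕ} {h : ι → ℕ} :
    Pi.single i c ≤ h ↔ c ≤ h i := by
  refine ⟨fun hle => by simpa using hle i, fun hc k => ?_⟩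
  rcases eq_or_ne k i with rfl | hk
  · simpa using hc
  · simp [Pi.single_eq_of_ne hk]

theorem pi_single_add_single_le_iff {ι : Type*} [DecidableEq ι] {i j : ι} (hij : i ≠ j)
    {c d : ℕ} {h : ι → ℕ} :
    Pi.single i c + Pi.single j d ≤ h ↔ c ≤ h i ∧ d ≤ h j := by
  refine ⟨fun hle => ⟨by simpa [hij] using hle i, by simpa [hij.symm] using hle j⟩,
    fun ⟨hc, hd⟩ k => ?_⟩
  rcases eq_or_ne k i with rfl | hki
  · simpa [hij] using hc
  rcases eq_or_ne k j with rfl | hkj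
  · simpa [hki] using hd
  · simp [Pi.single_eq_of_ne hki, Pi.single_eq_of_ne hkj]

variable {n : ℕ} {M : Type*} [AddCommMonoid M]

theorem sum_antidiagonalTuple_comp_add (k : ℕ) (u : Fin n → ℕ) (F : (Fin n → ℕ) → M) :
    ∑ e ∈ antidiagonalTuple n k, F (e + u) =
      ∑ h ∈ antidiagonalTuple n (k + ∑ i, u i) with u ≤ h, F h := by
  refine sum_nbij' (· + u) (· - u) (fun e he => ?_) (fun h hh => ?_)
    (fun e _ => add_tsub_cancel_right e u) (fun h hh => ?_) (fun _ _ => rfl)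
  · simp_all [mem_antidiagonalTuple, sum_add_distrib]
  · rw [mem_filter, mem_antidiagonalTuple] at hh
    rw [mem_antidiagonalTuple, Pi.sub_def, sum_tsub_distrib _ fun i _ => hh.2 i, hh.1,
      Nat.add_sub_cancel]
  · exact tsub_add_cancel_of_le (mem_filter.1 hh).2

theorem sum_sum_antidiagonalTuple_comp_add {ι : Type*} (A : Finset ι) (k : ι → ℕ)
    (u : ι → Fin n → ℕ) {N : ℕ} (hN : ∀ a ∈ A, k a + ∑ i, u a i = N)
    (F : (Fin n → ℕ) → M) :
    ∑ a ∈ A, ∑ e ∈ antidiagonalTuple n (k a), F (e + u a) =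
      ∑ h ∈ antidiagonalTuple n N, #{a ∈ A | u a ≤ h} • F h := by
  calc _ = ∑ a ∈ A, ∑ h ∈ antidiagonalTuple n N, if u a ≤ h then F h else 0 :=
        sum_congr rfl fun a ha => by rw [sum_antidiagonalTuple_comp_add, hN a ha, sum_filter]
    _ = _ := by
        rw [sum_comm]
        simp_rw [← sum_filter, sum_const]

theorem apply_le_of_mem_antidiagonalTuple {N : ℕ} {h : Fin n → ℕ}
    (hh : h ∈ antidiagonalTuple n N) (i : Fin n) : h i ≤ N :=
  mem_antidiagonalTuple.1 hh ▸ single_le_sum (fun _ _ => Nat.zero_le _) (mem_univ i)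

theorem card_filter_single_le (i : Fin n) {m s : ℕ} {h : Fin n → ℕ} (hh : h i ≤ m + s) :
    #{a ∈ range (m + 1) | Pi.single i (s + a) ≤ h} = h i + 1 - s := by
  simp_rw [pi_single_le_iff]
  rw [show {a ∈ range (m + 1) | s + a ≤ h i} = range (h i + 1 - s) by
    ext a; simp only [mem_filter, mem_range]; omega, card_range]

theorem card_filter_single_add_single_le {i j : Fin n} (hij : i ≠ j) {s : ℕ} (hs : 1 ≤ s)
    (h : Fin n → ℕ) :
    #{c ∈ range (s - 1) | Pi.single i (c + 1) + Pi.single j (s - 1 - c) ≤ h}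
      + (h i + 1 - s) + (h j + 1 - s) = h i + h j + 1 - s := by
  simp_rw [pi_single_add_single_le_iff hij]
  rw [show {c ∈ range (s - 1) | c + 1 ≤ h i ∧ s - 1 - c ≤ h j}
      = Ico (s - 1 - h j) (min (h i) (s - 1)) by
    ext c; simp only [mem_filter, mem_range, mem_Ico]; omega, Nat.card_Ico]
  omega

end Compositions

section SplitMerge

variable {n : ℕ}

def splitAt (Q : Fin (n + 1)) (f : Fin (n + 1) → ℕ) (j : ℕ) : Fin (n + 2) → ℕ :=
  Q.castSucc.insertNth j (Function.update f Q (f Q - j))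

def mergeAt (Q : Fin (n + 1)) (h : Fin (n + 2) → ℕ) : Fin (n + 1) → ℕ :=
  Function.update (Q.castSucc.removeNth h) Q (h Q.castSucc + h Q.succ)

theorem mergeAt_apply_self (Q : Fin (n + 1)) (h : Fin (n + 2) → ℕ) :
    mergeAt Q h Q = h Q.castSucc + h Q.succ :=
  Function.update_self ..

theorem mergeAt_apply_of_ne {P Q : Fin (n + 1)} (hPQ : P ≠ Q) (h : Fin (n + 2) → ℕ) :
    mergeAt Q h P = h (Q.castSucc.succAbove P) :=
  Function.update_of_ne hPQ ..

theorem sum_splitAt (Q : Fin (n + 1)) (f : Fin (n + 1) → ℕ) {j : ℕ} (hj : j ≤ f Q) :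
    ∑ i, splitAt Q f j i = ∑ i, f i := by
  rw [Fin.sum_univ_succAbove _ Q.castSucc, Fin.sum_univ_succAbove f Q]
  simp only [splitAt, Fin.insertNth_apply_same, Fin.insertNth_apply_succAbove]
  rw [Fin.sum_univ_succAbove _ Q, Function.update_self]
  simp only [Function.update_of_ne (Fin.succAbove_ne Q _)]
  omega

theorem mergeAt_splitAt (Q : Fin (n + 1)) (f : Fin (n + 1) → ℕ) {j : ℕ} (hj : j ≤ f Q) :
    mergeAt Q (splitAt Q f j) = f := by
  rw [mergeAt, splitAt, Fin.removeNth_insertNth, Fin.insertNth_apply_same,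
    ← Fin.succAbove_castSucc_self, Fin.insertNth_apply_succAbove, Function.update_self,
    Function.update_idem, Nat.add_sub_cancel' hj, Function.update_eq_self]

theorem splitAt_mergeAt (Q : Fin (n + 1)) (h : Fin (n + 2) → ℕ) :
    splitAt Q (mergeAt Q h) (h Q.castSucc) = h := by
  have hQ : Q.castSucc.removeNth h Q = h Q.succ := by
    rw [Fin.removeNth_apply, Fin.succAbove_castSucc_self]
  rw [splitAt, mergeAt_apply_self, Nat.add_sub_cancel_left, mergeAt, Function.update_idem,
    ← hQ, Function.update_eq_self, Fin.insertNth_self_removeNth]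

theorem sum_sum_range_splitAt {M : Type*} [AddCommMonoid M] (Q : Fin (n + 1)) (N : ℕ)
    (G : (Fin (n + 1) → ℕ) → (Fin (n + 2) → ℕ) → M) :
    ∑ f ∈ antidiagonalTuple (n + 1) N, ∑ j ∈ range (f Q + 1), G f (splitAt Q f j) =
      ∑ h ∈ antidiagonalTuple (n + 2) N, G (mergeAt Q h) h := by
  rw [sum_sigma']
  refine sum_nbij' (fun x => splitAt Q x.1 x.2) (fun h => ⟨mergeAt Q h, h Q.castSucc⟩)
    (fun x hx => ?_) (fun h hh => ?_) (fun x hx => ?_) (fun h _ => splitAt_mergeAt Q h)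
    (fun x hx => ?_)
  · simp only [mem_sigma, mem_antidiagonalTuple, mem_range] at hx ⊢
    rw [sum_splitAt Q _ (by omega), hx.1]
  · simp only [mem_sigma, mem_antidiagonalTuple, mem_range] at hh ⊢
    have : ∑ i, mergeAt Q h i = ∑ i, h i := by
      conv_rhs => rw [← splitAt_mergeAt Q h]
      rw [sum_splitAt Q _ (by rw [mergeAt_apply_self]; omega)]
    rw [mergeAt_apply_self]
    exact ⟨this.trans hh, by omega⟩
  · simp only [mem_sigma, mem_range] at hx
    rw [mergeAt_splitAt Q _ (by omega), splitAt, Fin.insertNth_apply_same]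
  · simp only [mem_sigma, mem_range] at hx
    rw [mergeAt_splitAt Q _ (by omega)]

theorem splitAt_apply (Q : Fin (n + 1)) (f : Fin (n + 1) → ℕ) (j k : ℕ) (hk : k < n + 2) :
    splitAt Q f j ⟨k, hk⟩ =
      if h : k < Q then f ⟨k, by omega⟩ else if k = Q then j else if k = Q + 1 then f Q - j
      else f ⟨k - 1, by omega⟩ := by
  have hQ := Q.isLt
  rcases lt_trichotomy k Q with hlt | rfl | hgt
  · have : (⟨k, hk⟩ : Fin (n + 2)) = Q.castSucc.succAbove ⟨k, by omega⟩ := by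
      rw [Fin.succAbove_of_castSucc_lt _ _ (by simpa only [Fin.lt_def])]; rfl
    rw [this, splitAt, Fin.insertNth_apply_succAbove,
      Function.update_of_ne (by simp only [ne_eq, Fin.ext_iff]; omega), dif_pos hlt]
  · rw [dif_neg (lt_irrefl _), if_pos rfl]
    exact Fin.insertNth_apply_same ..
  rcases Nat.lt_or_ge (Q + 1) k with hgt' | hle
  · have : (⟨k, hk⟩ : Fin (n + 2)) = Q.castSucc.succAbove ⟨k - 1, by omega⟩ := by
      rw [Fin.succAbove_of_le_castSucc _ _
        (by simp only [Fin.castSucc_mk, Fin.le_def, Fin.val_castSucc]; omega)]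
      ext; simp only [Fin.succ_mk]; omega
    rw [this, splitAt, Fin.insertNth_apply_succAbove,
      Function.update_of_ne (by simp only [ne_eq, Fin.ext_iff]; omega), dif_neg (by omega),
      if_neg (by omega), if_neg (by omega)]
  · have : (⟨k, hk⟩ : Fin (n + 2)) = Q.castSucc.succAbove Q := by
      rw [Fin.succAbove_castSucc_self]; ext; simp only [Fin.val_succ]; omega
    rw [this, splitAt, Fin.insertNth_apply_succAbove, Function.update_self, dif_neg (by omega),
      if_neg (by omega), if_pos (by omega)]

def oneAtElseTwo (c : Fin n) : Fin n → ℕ := fun i => if i = c then 1 else 2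

theorem take_append_drop_eq_ofFn_splitAt (Q : Fin (n + 1)) (f : Fin (n + 1) → ℕ) {j : ℕ}
    (hj : j ≤ f Q) :
    (List.ofFn fun i => f i + 2).take Q ++ [j + 1, f Q - j + 2] ++
        (List.ofFn fun i => f i + 2).drop (Q + 1) =
      List.ofFn (oneAtElseTwo Q.castSucc + splitAt Q f j) := by
  refine List.ext_getElem (by simp only [List.length_append, List.length_take, List.length_drop,
    List.length_cons, List.length_nil, List.length_ofFn]; omega) fun k hk _ => ?_
  simp only [List.getElem_append, List.length_append, List.length_take, List.length_ofFn,
    List.length_cons, List.length_nil, List.getElem_take, List.getElem_cons, List.getElem_drop,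
    List.getElem_ofFn, Pi.add_apply, splitAt_apply, oneAtElseTwo, Fin.ext_iff, Fin.val_castSucc]
  split_ifs <;> first | omega | rfl | (rw [add_comm]; congr 2; ext; simp only; omega)

end SplitMerge

section OhnoSums

variable {n : ℕ}

theorem ohno_ofFn (m : ℕ) (v : Fin n → ℕ) :
    ohno m (List.ofFn v) = ∑ e ∈ antidiagonalTuple n m, mzv (List.ofFn (v + e)) := by
  have key : ∀ (N : ℕ) (hN : N = n), ∑ e ∈ antidiagonalTuple N m,
      mzv (List.ofFn fun i : Fin N => v (i.cast hN) + e i) =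
        ∑ e ∈ antidiagonalTuple n m, mzv (List.ofFn (v + e)) := by
    rintro _ rfl; rfl
  simp only [ohno, List.get_ofFn]
  exact key _ List.length_ofFn

open scoped Classical in
theorem sum_ohno_ofFn_add {ι : Type*} (b : Fin n → ℕ) (A : Finset ι) (k : ι → ℕ)
    (u : ι → Fin n → ℕ) {N : ℕ} (hN : ∀ a ∈ A, k a + ∑ i, u a i = N) :
    ∑ a ∈ A, ohno (k a) (List.ofFn (b + u a)) =
      ∑ h ∈ antidiagonalTuple n N,
        (#{a ∈ A | u a ≤ h} : ℝ) * mzv (List.ofFn (b + h)) := by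
  simp_rw [ohno_ofFn, ← nsmul_eq_mul]
  rw [← sum_sum_antidiagonalTuple_comp_add A k u hN]
  refine sum_congr rfl fun a _ => sum_congr rfl fun e _ => ?_
  rw [add_assoc, add_comm (u a)]

theorem sub_add_sum_single_of_mem_range {m a : ℕ} (ha : a ∈ range (m + 1)) (i : Fin n)
    (s : ℕ) :
    m - a + ∑ k, (Pi.single i (s + a) : Fin n → ℕ) k = m + s := by
  rw [sum_pi_single', if_pos (mem_univ i)]
  have := mem_range.1 ha
  omega

/-- `J_{p,q}` for `P = p - 1`, `Q = q - 1`, `N = m + s`, with the pair `(m, j)` replaced by the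
composition `h` of `N` into `n + 2` parts obtained by splitting `m_q` into `(j, m_q - j)`. -/
noncomputable def jSum (s N : ℕ) (P Q : Fin (n + 1)) : ℝ :=
  ∑ h ∈ antidiagonalTuple (n + 2) N,
    ((mergeAt Q h P + 1 - s : ℕ) : ℝ) * mzv (List.ofFn (oneAtElseTwo Q.castSucc + h))

theorem sum_mul_sum_range_mzv_eq_jSum (s N : ℕ) (P Q : Fin (n + 1)) :
    ∑ f ∈ antidiagonalTuple (n + 1) N, ((f P + 1 - s : ℕ) : ℝ) *
      ∑ j ∈ range (f Q + 1), mzv ((List.ofFn fun i => f i + 2).take Q ++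
        [j + 1, f Q - j + 2] ++ (List.ofFn fun i => f i + 2).drop (Q + 1)) = jSum s N P Q := by
  simp_rw [mul_sum]
  rw [jSum, ← sum_sum_range_splitAt Q N fun f h =>
    ((f P + 1 - s : ℕ) : ℝ) * mzv (List.ofFn (oneAtElseTwo Q.castSucc + h))]
  refine sum_congr rfl fun f _ => sum_congr rfl fun j hj => ?_
  rw [take_append_drop_eq_ofFn_splitAt Q f (Nat.lt_succ_iff.1 (mem_range.1 hj))]

theorem sum_range_ohno_eq_jSum_of_ne {P Q : Fin (n + 1)} (hPQ : P ≠ Q) (m s : ℕ) :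
    ∑ a ∈ range (m + 1), ohno (m - a)
        (List.ofFn (oneAtElseTwo Q.castSucc + Pi.single (Q.castSucc.succAbove P) (s + a))) =
      jSum s (m + s) P Q := by
  rw [sum_ohno_ofFn_add _ _ _ _ fun a ha => sub_add_sum_single_of_mem_range ha _ _, jSum]
  refine sum_congr rfl fun h hh => ?_
  rw [card_filter_single_le _ (apply_le_of_mem_antidiagonalTuple hh _), mergeAt_apply_of_ne hPQ]

theorem sum_range_ohno_eq_jSum_self (Q : Fin (n + 1)) (m : ℕ) {s : ℕ} (hs : 1 ≤ s) :
    ∑ a ∈ range (m + 1),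
        (ohno (m - a) (List.ofFn (oneAtElseTwo Q.castSucc + Pi.single Q.succ (s + a)))
          + ohno (m - a) (List.ofFn (oneAtElseTwo Q.castSucc + Pi.single Q.castSucc (s + a))))
      + ∑ c ∈ range (s - 1), ohno m (List.ofFn (oneAtElseTwo Q.castSucc +
          (Pi.single Q.castSucc (c + 1) + Pi.single Q.succ (s - 1 - c)))) =
      jSum s (m + s) Q Q := by
  have hQ : Q.castSucc ≠ Q.succ := Fin.castSucc_lt_succ.ne
  have hC (c : ℕ) (hc : c ∈ range (s - 1)) :
      m + ∑ k, (Pi.single Q.castSucc (c + 1) + Pi.single Q.succ (s - 1 - c) :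
        Fin (n + 2) → ℕ) k = m + s := by
    simp only [Pi.add_apply, sum_add_distrib, sum_pi_single', mem_univ, if_true]
    have := mem_range.1 hc
    omega
  rw [sum_add_distrib,
    sum_ohno_ofFn_add _ _ _ _ fun a ha => sub_add_sum_single_of_mem_range ha _ _,
    sum_ohno_ofFn_add _ _ _ _ fun a ha => sub_add_sum_single_of_mem_range ha _ _,
    sum_ohno_ofFn_add _ _ _ _ hC, jSum, ← sum_add_distrib, ← sum_add_distrib]
  refine sum_congr rfl fun h hh => ?_
  rw [← add_mul, ← add_mul, mergeAt_apply_self,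
    card_filter_single_le _ (apply_le_of_mem_antidiagonalTuple hh _),
    card_filter_single_le _ (apply_le_of_mem_antidiagonalTuple hh _),
    ← card_filter_single_add_single_le hQ hs h]
  push_cast
  ring

end OhnoSums

theorem sum_ohno_eq_jSum_of_lt {l p q : ℕ} (s m : ℕ) (hp : 1 ≤ p) (hpq : p < q)
    (hq : q ≤ l + 1) :
    ∑ a ∈ range (m + 1), ohno (m - a) (List.replicate (p - 1) 2 ++ [s + a + 2] ++
        List.replicate (q - p - 1) 2 ++ [1] ++ List.replicate (l + 2 - q) 2) =
      jSum s (m + s) (⟨p - 1, by omega⟩ : Fin (l + 1)) ⟨q - 1, by omega⟩ := by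
  rw [← sum_range_ohno_eq_jSum_of_ne (by simp only [ne_eq, Fin.ext_iff]; omega),
    Fin.succAbove_of_castSucc_lt _ _ (by simp only [Fin.castSucc_mk, Fin.lt_def]; omega)]
  refine sum_congr rfl fun a _ => congrArg _ (List.ext_getElem
    (by simp only [List.length_append, List.length_replicate, List.length_cons, List.length_nil,
      List.length_ofFn]; omega) fun k _ _ => ?_)
  simp only [List.getElem_ofFn, List.getElem_append, List.length_append, List.length_replicate,
    List.length_cons, List.length_nil, List.getElem_replicate, List.getElem_cons, oneAtElseTwo,
    Pi.add_apply, Pi.single_apply, Fin.ext_iff, Fin.val_castSucc]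
  split_ifs <;> omega

theorem sum_ohno_eq_jSum_of_gt {l p q : ℕ} (s m : ℕ) (hq : 1 ≤ q) (hpq : q < p)
    (hp : p ≤ l + 1) :
    ∑ a ∈ range (m + 1), ohno (m - a) (List.replicate (q - 1) 2 ++ [1] ++
        List.replicate (p - q) 2 ++ [s + a + 2] ++ List.replicate (l + 1 - p) 2) =
      jSum s (m + s) (⟨p - 1, by omega⟩ : Fin (l + 1)) ⟨q - 1, by omega⟩ := by
  rw [← sum_range_ohno_eq_jSum_of_ne (by simp only [ne_eq, Fin.ext_iff]; omega),
    Fin.succAbove_of_le_castSucc _ _ (by simp only [Fin.castSucc_mk, Fin.le_def]; omega)]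
  refine sum_congr rfl fun a _ => congrArg _ (List.ext_getElem
    (by simp only [List.length_append, List.length_replicate, List.length_cons, List.length_nil,
      List.length_ofFn]; omega) fun k _ _ => ?_)
  simp only [List.getElem_ofFn, List.getElem_append, List.length_append, List.length_replicate,
    List.length_cons, List.length_nil, List.getElem_replicate, List.getElem_cons, oneAtElseTwo,
    Pi.add_apply, Pi.single_apply, Fin.ext_iff, Fin.val_castSucc, Fin.val_succ]
  split_ifs <;> omega

theorem sum_ohno_eq_jSum_self {l p s : ℕ} (m : ℕ) (hs : 1 ≤ s) (hp : 1 ≤ p)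
    (hpl : p ≤ l + 1) :
    (∑ a ∈ range (m + 1),
        (ohno (m - a) (List.replicate (p - 1) 2 ++ [1, s + a + 2] ++ List.replicate (l + 1 - p) 2)
          + ohno (m - a) (List.replicate (p - 1) 2 ++ [s + a + 1] ++
              List.replicate (l + 2 - p) 2)))
      + ∑ c ∈ range (s - 1), ohno m (List.replicate (p - 1) 2 ++ [c + 2, s - c + 1] ++
          List.replicate (l + 1 - p) 2) =
      jSum s (m + s) (⟨p - 1, by omega⟩ : Fin (l + 1)) ⟨p - 1, by omega⟩ := by
  rw [← sum_range_ohno_eq_jSum_self _ m hs]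
  refine congrArg₂ (· + ·) (sum_congr rfl fun a _ => congrArg₂ (· + ·) (congrArg _ ?_)
    (congrArg _ ?_)) (sum_congr rfl fun c hc => have := mem_range.1 hc; congrArg _ ?_)
  all_goals
    refine List.ext_getElem (by simp only [List.length_append, List.length_replicate,
      List.length_cons, List.length_nil, List.length_ofFn]; omega) fun k _ _ => ?_
    simp only [List.getElem_ofFn, List.getElem_append, List.length_append, List.length_replicate,
      List.length_cons, List.length_nil, List.getElem_replicate, List.getElem_cons, oneAtElseTwo,
      Pi.single_apply, Pi.add_apply, Fin.ext_iff, Fin.val_castSucc, Fin.val_succ]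
    split_ifs <;> omega

/-- For integers `l ≥ 1`, `s ≥ 2`, `m ≥ 0`, and `1 ≤ p, q ≤ l+1`, one has
`I_{p,q} = J_{p,q}`, where
`I_{p,q} = Σ_{a=0}^{m} O_{m−a}({2}^{p−1}, s+a+2, {2}^{q−p−1}, 1, {2}^{l−q+2})` if `p < q`,
`I_{p,q} = Σ_{a=0}^{m} ( O_{m−a}({2}^{p−1}, 1, s+a+2, {2}^{l−p+1})
  + O_{m−a}({2}^{p−1}, s+a+1, {2}^{l−p+2}) )
  + Σ_{j=0}^{s−2} O_m({2}^{p−1}, j+2, s−j+1, {2}^{l−p+1})` if `p = q`,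
`I_{p,q} = Σ_{a=0}^{m} O_{m−a}({2}^{q−1}, 1, {2}^{p−q}, s+a+2, {2}^{l−p+1})` if `p > q`, and
`J_{p,q} = Σ_{m₁+⋯+m_{l+1}=m+s} max{m_p−s+1, 0} ·
  Σ_{j=0}^{m_q} ζ(m₁+2, …, m_{q−1}+2, j+1, m_q−j+2, m_{q+1}+2, …, m_{l+1}+2)`. -/
theorem statement11 (l s m p q : ℕ) (hs : 2 ≤ s)
    (hp : 1 ≤ p) (hp' : p ≤ l + 1) (hq : 1 ≤ q) (hq' : q ≤ l + 1) :
    (if p < q then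
        ∑ a ∈ Finset.range (m + 1),
          ohno (m - a) (List.replicate (p - 1) 2 ++ [s + a + 2] ++
            List.replicate (q - p - 1) 2 ++ [1] ++ List.replicate (l + 2 - q) 2)
      else if p = q then
        (∑ a ∈ Finset.range (m + 1),
          (ohno (m - a) (List.replicate (p - 1) 2 ++ [1, s + a + 2] ++
              List.replicate (l + 1 - p) 2)
            + ohno (m - a) (List.replicate (p - 1) 2 ++ [s + a + 1] ++
                List.replicate (l + 2 - p) 2)))
        + ∑ j ∈ Finset.range (s - 1),
            ohno m (List.replicate (p - 1) 2 ++ [j + 2, s - j + 1] ++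
              List.replicate (l + 1 - p) 2)
      else
        ∑ a ∈ Finset.range (m + 1),
          ohno (m - a) (List.replicate (q - 1) 2 ++ [1] ++
            List.replicate (p - q) 2 ++ [s + a + 2] ++ List.replicate (l + 1 - p) 2))
    = ∑ f ∈ Finset.Nat.antidiagonalTuple (l + 1) (m + s),
        ((f ⟨p - 1, by omega⟩ + 1 - s : ℕ) : ℝ) *
          ∑ j ∈ Finset.range (f ⟨q - 1, by omega⟩ + 1),
            mzv ((List.ofFn fun i : Fin (l + 1) => f i + 2).take (q - 1) ++
              [j + 1, f ⟨q - 1, by omega⟩ - j + 2] ++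
              (List.ofFn fun i : Fin (l + 1) => f i + 2).drop q) := by
  have hJ := sum_mul_sum_range_mzv_eq_jSum s (m + s) (⟨p - 1, by omega⟩ : Fin (l + 1))
    ⟨q - 1, by omega⟩
  rw [show q - 1 + 1 = q by omega] at hJ
  rw [hJ]
  rcases lt_trichotomy p q with hpq | rfl | hpq
  · rw [if_pos hpq, sum_ohno_eq_jSum_of_lt s m hp hpq hq']
  · rw [if_neg (lt_irrefl p), if_pos rfl, sum_ohno_eq_jSum_self m (by omega) hp hp']
  · rw [if_neg (by omega), if_neg (by omega), sum_ohno_eq_jSum_of_gt s m hq hpq hp']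
end

section
/- For integers s, t ≥ 3, l ≥ 1, and m ≥ 0, one has O_m((s) ⧢ ((t) ⧢ ({2}^l))†) − O_m((s−1) ⊛ ((t+1) ⧢ ({2}^l))†) = Σ_{a+b+c=l, a,b,c≥0} ( O_m({2}^a, s, {2}^b, {1}^{t−2}, {2}^{c+1}) + O_m({2}^a, {1}^{t−2}, {2}^{b+1}, s, {2}^c) − O_m({2}^a, {1}^{t−1}, {2}^b, s+1, {2}^c) ) − Σ_{a+b=l, a,b≥0} O_m({2}^a, s, {1}^{t−2}, {2}^{b+1}) − Σ_{a+b+c=l−1, a,b,c≥0} O_m({2}^a, s+1, {2}^b, {1}^{t−1}, {2}^{c+1}). -/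
open scoped BigOperators

/-! The identity holds already between formal sums of indices, before `O_m` is applied.
By duality `((t) ⧢ ({2}^l))† = Σ_{a+b=l} ({2}^a, {1}^{t-2}, {2}^{b+1})`, so the first term
inserts `s` at every position of these indices, while the second adds `s - 1` to every entry
of `({2}^a, {1}^{t-1}, {2}^{b+1})`. Adding `s - 1` to one of `t - 1` ones is the same as
inserting `s` among `t - 2` ones, so the middle blocks cancel; the remaining insertions into
the outer blocks of `2`s, regrouped over `a + b + c = l`, give the right-hand side. -/

open Finset List Finsupp

lemma mapDomain_ofIdx (f : List ℕ → List ℕ) (k : List ℕ) :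
    mapDomain f (ofIdx k) = ofIdx (f k) :=
  mapDomain_single

lemma linearCombination_ofIdx {M : Type*} [AddCommMonoid M] [Module ℚ M] (v : List ℕ → M)
    (k : List ℕ) : linearCombination ℚ v (ofIdx k) = v k := by
  simp [ofIdx]

lemma ohnoL_eq_linearCombination (m : ℕ) : ohnoL m = linearCombination ℚ (ohno m) := by
  funext x
  simp [ohnoL, linearCombination_apply, Rat.smul_def]

lemma shuf_ofIdx_eq_linearCombination (k : List ℕ) :
    shuf (ofIdx k) = linearCombination ℚ (shufL k) := by
  funext x
  simp [shuf, ofIdx, linearCombination_apply]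

lemma hast_eq_linearCombination (a : ℕ) : hast a = linearCombination ℚ (hastIdx a) := by
  funext x
  simp [hast, linearCombination_apply]

lemma shufL_singleton_nil (x : ℕ) : shufL [x] [] = ofIdx [x] := by
  simp [shufL, shuffles]

lemma shufL_singleton_cons (x y : ℕ) (w : List ℕ) :
    shufL [x] (y :: w) = ofIdx (x :: y :: w) + mapDomain (y :: ·) (shufL [x] w) := by
  have := map_multiset_sum (mapDomain.addMonoidHom (M := ℚ) (y :: ·))
    ((shuffles [x] w).map ofIdx)
  simp_all [shufL, shuffles, Multiset.map_map, mapDomain_ofIdx]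

lemma hastIdx_nil (a : ℕ) : hastIdx a [] = 0 := rfl

lemma hastIdx_cons (a y : ℕ) (w : List ℕ) :
    hastIdx a (y :: w) = ofIdx ((y + a) :: w) + mapDomain (y :: ·) (hastIdx a w) := by
  simp [hastIdx, Fin.sum_univ_succ, mapDomain_finsetSum, ofIdx]

lemma shufL_singleton_append (x : ℕ) (u v : List ℕ) :
    shufL [x] (u ++ v) = mapDomain (· ++ v) (shufL [x] u) + mapDomain (u ++ ·) (shufL [x] v)
      - ofIdx (u ++ x :: v) := by
  induction u with
  | nil =>
    simp only [nil_append, shufL_singleton_nil, mapDomain_ofIdx, singleton_append,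
      add_sub_cancel_left]
    exact mapDomain_id.symm
  | cons y u ih =>
    rw [cons_append, shufL_singleton_cons, ih, shufL_singleton_cons]
    simp only [mapDomain_add, mapDomain_sub, mapDomain_ofIdx, ← mapDomain_comp,
      Function.comp_def, cons_append]
    abel

lemma hastIdx_append (a : ℕ) (u v : List ℕ) :
    hastIdx a (u ++ v)
      = mapDomain (· ++ v) (hastIdx a u) + mapDomain (u ++ ·) (hastIdx a v) := by
  induction u with
  | nil =>
    simp only [nil_append, hastIdx_nil, mapDomain_zero, zero_add]
    exact mapDomain_id.symm
  | cons y u ih =>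
    rw [cons_append, hastIdx_cons, ih, hastIdx_cons]
    simp only [mapDomain_add, mapDomain_ofIdx, ← mapDomain_comp, Function.comp_def, cons_append]
    abel

lemma shufL_singleton_replicate (x y n : ℕ) :
    shufL [x] (replicate n y)
      = ∑ p ∈ antidiagonal n, ofIdx (replicate p.1 y ++ x :: replicate p.2 y) := by
  induction n with
  | zero => simp [shufL_singleton_nil]
  | succ n ih =>
    rw [Nat.sum_antidiagonal_succ, replicate_succ, shufL_singleton_cons, ih,
      mapDomain_finsetSum]
    simp [mapDomain_ofIdx, replicate_succ]

lemma hastIdx_replicate_succ (a y n : ℕ) :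
    hastIdx a (replicate (n + 1) y)
      = ∑ p ∈ antidiagonal n, ofIdx (replicate p.1 y ++ (y + a) :: replicate p.2 y) := by
  induction n with
  | zero => simp [hastIdx_cons, hastIdx_nil]
  | succ n ih =>
    rw [Nat.sum_antidiagonal_succ, replicate_succ, hastIdx_cons, ih, mapDomain_finsetSum]
    simp [mapDomain_ofIdx, replicate_succ]

lemma hastIdx_replicate_succ_one (a n : ℕ) :
    hastIdx a (replicate (n + 1) 1) = shufL [a + 1] (replicate n 1) := by
  rw [hastIdx_replicate_succ, shufL_singleton_replicate, add_comm 1 a]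

lemma decodeAux_replicate_true_append (j n : ℕ) (w : List Bool) :
    decodeAux (replicate j true ++ w) n = decodeAux w (n + j) := by
  induction j generalizing n with
  | zero => rfl
  | succ j ih => rw [replicate_succ, cons_append, decodeAux, ih]; ring_nf

lemma decodeAux_replicate_true_append_encodeIdx (k : List ℕ) (hk : ∀ c ∈ k, 1 ≤ c)
    (j n : ℕ) :
    decodeAux (replicate j true ++ encodeIdx k) n = (n + j) :: k := by
  induction k generalizing j n with
  | nil => simpa [encodeIdx, decodeAux] using decodeAux_replicate_true_append j n []
  | cons c k ih =>
    have hc := hk c mem_cons_self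
    rw [encodeIdx, flatMap_cons, decodeAux_replicate_true_append, cons_append, decodeAux,
      ← encodeIdx, ih (fun c hc => hk c (mem_cons_of_mem _ hc))]
    congr 2
    omega

lemma decodeIdx_encodeIdx (k : List ℕ) (hk : ∀ c ∈ k, 1 ≤ c) :
    decodeIdx (encodeIdx k) = k := by
  cases k with
  | nil => rfl
  | cons c k =>
    have hc := hk c mem_cons_self
    rw [encodeIdx, flatMap_cons, cons_append, decodeIdx, ← encodeIdx,
      decodeAux_replicate_true_append_encodeIdx k (fun c hc => hk c (mem_cons_of_mem _ hc))]
    congr 1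
    omega

lemma dualIdx_replicate_two_append (a b t : ℕ) (ht : 2 ≤ t) :
    dualIdx (replicate a 2 ++ t :: replicate b 2)
      = replicate b 2 ++ replicate (t - 2) 1 ++ replicate (a + 1) 2 := by
  rw [dualIdx, ← decodeIdx_encodeIdx (replicate b 2 ++ replicate (t - 2) 1 ++ replicate (a + 1) 2)
    (by simp; omega)]
  congr 1
  obtain ⟨n, rfl⟩ : ∃ n, t = n + 2 := ⟨t - 2, by omega⟩
  simp [encodeIdx, flatMap_replicate, reverse_flatten, replicate_succ]

lemma dualL_shufL_singleton_replicate_two (t l : ℕ) (ht : 2 ≤ t) :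
    dualL (shufL [t] (replicate l 2))
      = ∑ p ∈ antidiagonal l,
          ofIdx (replicate p.1 2 ++ replicate (t - 2) 1 ++ replicate (p.2 + 1) 2) := by
  rw [shufL_singleton_replicate, dualL, mapDomain_finsetSum,
    ← Nat.sum_antidiagonal_swap]
  simp [mapDomain_ofIdx, dualIdx_replicate_two_append _ _ _ ht]

lemma shufL_singleton_sub_hastIdx_replicate (s a n b : ℕ) (hs : 1 ≤ s) :
    shufL [s] (replicate a 2 ++ replicate n 1 ++ replicate (b + 1) 2)
      - hastIdx (s - 1) (replicate a 2 ++ replicate (n + 1) 1 ++ replicate (b + 1) 2)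
    = ∑ q ∈ antidiagonal a,
          ofIdx (replicate q.1 2 ++ s :: replicate q.2 2 ++ replicate n 1 ++ replicate (b + 1) 2)
      + ∑ q ∈ antidiagonal b,
          ofIdx (replicate a 2 ++ replicate n 1 ++ replicate (q.1 + 1) 2 ++ s :: replicate q.2 2)
      - ∑ q ∈ antidiagonal b,
          ofIdx (replicate a 2 ++ replicate (n + 1) 1 ++ replicate q.1 2 ++
            (s + 1) :: replicate q.2 2)
      - ofIdx (replicate a 2 ++ s :: replicate n 1 ++ replicate (b + 1) 2)
      - mapDomain (· ++ replicate (n + 1) 1 ++ replicate (b + 1) 2)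
          (hastIdx (s - 1) (replicate a 2)) := by
  rw [append_assoc, append_assoc, shufL_singleton_append, shufL_singleton_append,
    hastIdx_append, hastIdx_append, hastIdx_replicate_succ_one, Nat.sub_add_cancel hs,
    shufL_singleton_replicate s 2 (b + 1), Nat.sum_antidiagonal_succ, hastIdx_replicate_succ,
    show 2 + (s - 1) = s + 1 by omega, shufL_singleton_replicate s 2 a]
  simp only [mapDomain_add, mapDomain_sub, mapDomain_finsetSum, mapDomain_ofIdx,
    ← mapDomain_comp, Function.comp_def, append_assoc, cons_append, nil_append, replicate_succ,
    replicate_zero]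
  abel

section AntidiagonalTuple

variable {M : Type*} [AddCommMonoid M]

lemma Finset.Nat.sum_antidiagonalTuple_three_eq_sum_antidiagonal_fst (g : (Fin 3 → ℕ) → M)
    (n : ℕ) :
    ∑ f ∈ Nat.antidiagonalTuple 3 n, g f
      = ∑ p ∈ antidiagonal n, ∑ q ∈ antidiagonal p.1, g ![q.1, q.2, p.2] := by
  rw [sum_sigma']
  refine sum_nbij' (fun f => ⟨(f 0 + f 1, f 2), (f 0, f 1)⟩) (fun x => ![x.2.1, x.2.2, x.1.2])
    ?_ ?_ ?_ ?_ ?_ <;>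
    simp_all [Nat.mem_antidiagonalTuple, Fin.sum_univ_three, funext_iff, Fin.forall_fin_succ]
  exact fun f _ => congrArg g (funext fun i => by fin_cases i <;> rfl)

lemma Finset.Nat.sum_antidiagonalTuple_three_eq_sum_antidiagonal_snd (g : (Fin 3 → ℕ) → M)
    (n : ℕ) :
    ∑ f ∈ Nat.antidiagonalTuple 3 n, g f
      = ∑ p ∈ antidiagonal n, ∑ q ∈ antidiagonal p.2, g ![p.1, q.1, q.2] := by
  rw [sum_sigma']
  refine sum_nbij' (fun f => ⟨(f 0, f 1 + f 2), (f 1, f 2)⟩) (fun x => ![x.1.1, x.2.1, x.2.2])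
    ?_ ?_ ?_ ?_ ?_ <;>
    simp_all [Nat.mem_antidiagonalTuple, Fin.sum_univ_three, funext_iff, Fin.forall_fin_succ,
      add_assoc]
  exact fun f _ => congrArg g (funext fun i => by fin_cases i <;> rfl)

end AntidiagonalTuple

theorem shuf_dualL_sub_hast_dualL (s t l : ℕ) (hs : 1 ≤ s) (ht : 2 ≤ t) (hl : 1 ≤ l) :
    shuf (ofIdx [s]) (dualL (shufL [t] (replicate l 2)))
      - hast (s - 1) (dualL (shufL [t + 1] (replicate l 2)))
    = (∑ f ∈ Nat.antidiagonalTuple 3 l,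
          (ofIdx (replicate (f 0) 2 ++ [s] ++ replicate (f 1) 2 ++
              replicate (t - 2) 1 ++ replicate (f 2 + 1) 2)
            + ofIdx (replicate (f 0) 2 ++ replicate (t - 2) 1 ++
                replicate (f 1 + 1) 2 ++ [s] ++ replicate (f 2) 2)
            - ofIdx (replicate (f 0) 2 ++ replicate (t - 1) 1 ++
                replicate (f 1) 2 ++ [s + 1] ++ replicate (f 2) 2)))
      - (∑ p ∈ antidiagonal l,
          ofIdx (replicate p.1 2 ++ [s] ++ replicate (t - 2) 1 ++ replicate (p.2 + 1) 2))
      - ∑ f ∈ Nat.antidiagonalTuple 3 (l - 1),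
          ofIdx (replicate (f 0) 2 ++ [s + 1] ++ replicate (f 1) 2 ++
            replicate (t - 1) 1 ++ replicate (f 2 + 1) 2) := by
  obtain ⟨n, rfl⟩ : ∃ n, t = n + 2 := ⟨t - 2, by omega⟩
  obtain ⟨l, rfl⟩ : ∃ l', l = l' + 1 := ⟨l - 1, by omega⟩
  rw [shuf_ofIdx_eq_linearCombination, hast_eq_linearCombination,
    dualL_shufL_singleton_replicate_two _ _ ht,
    dualL_shufL_singleton_replicate_two _ _ (by omega)]
  simp only [map_sum, linearCombination_ofIdx, ← sum_sub_distrib, Nat.add_sub_cancel,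
    show n + 2 + 1 - 2 = n + 1 by omega, show n + 2 - 1 = n + 1 by omega]
  simp only [shufL_singleton_sub_hastIdx_replicate s _ n _ hs, sum_sub_distrib, sum_add_distrib]
  refine congrArg₂ (· - ·) (congrArg₂ (· - ·) (congrArg₂ (· - ·)
    (congrArg₂ (· + ·) ?_ ?_) ?_) ?_) ?_
  · rw [Nat.sum_antidiagonalTuple_three_eq_sum_antidiagonal_fst]
    simp
  · rw [Nat.sum_antidiagonalTuple_three_eq_sum_antidiagonal_snd]
    simp
  · rw [Nat.sum_antidiagonalTuple_three_eq_sum_antidiagonal_snd]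
    simp
  · simp
  · rw [Nat.sum_antidiagonal_succ, Nat.sum_antidiagonalTuple_three_eq_sum_antidiagonal_fst]
    simp [hastIdx_nil, hastIdx_replicate_succ, mapDomain_finsetSum, mapDomain_ofIdx,
      show 2 + (s - 1) = s + 1 by omega]

/-- For integers `s, t ≥ 3`, `l ≥ 1`, and `m ≥ 0`,
`O_m((s) ⧢ ((t) ⧢ ({2}^l))†) − O_m((s−1) ⊛ ((t+1) ⧢ ({2}^l))†)
  = Σ_{a+b+c=l} ( O_m({2}^a, s, {2}^b, {1}^{t−2}, {2}^{c+1})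
      + O_m({2}^a, {1}^{t−2}, {2}^{b+1}, s, {2}^c) − O_m({2}^a, {1}^{t−1}, {2}^b, s+1, {2}^c) )
    − Σ_{a+b=l} O_m({2}^a, s, {1}^{t−2}, {2}^{b+1})
    − Σ_{a+b+c=l−1} O_m({2}^a, s+1, {2}^b, {1}^{t−1}, {2}^{c+1})`. -/
theorem statement18 (s t l m : ℕ) (hs : 3 ≤ s) (ht : 3 ≤ t) (hl : 1 ≤ l) :
    ohnoL m (shuf (ofIdx [s]) (dualL (shufL [t] (List.replicate l 2))))
      - ohnoL m (hast (s - 1) (dualL (shufL [t + 1] (List.replicate l 2))))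
    = (∑ f ∈ Finset.Nat.antidiagonalTuple 3 l,
          (ohno m (List.replicate (f 0) 2 ++ [s] ++ List.replicate (f 1) 2 ++
              List.replicate (t - 2) 1 ++ List.replicate (f 2 + 1) 2)
            + ohno m (List.replicate (f 0) 2 ++ List.replicate (t - 2) 1 ++
                List.replicate (f 1 + 1) 2 ++ [s] ++ List.replicate (f 2) 2)
            - ohno m (List.replicate (f 0) 2 ++ List.replicate (t - 1) 1 ++
                List.replicate (f 1) 2 ++ [s + 1] ++ List.replicate (f 2) 2)))
      - (∑ p ∈ Finset.HasAntidiagonal.antidiagonal l,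
          ohno m (List.replicate p.1 2 ++ [s] ++ List.replicate (t - 2) 1 ++
            List.replicate (p.2 + 1) 2))
      - ∑ f ∈ Finset.Nat.antidiagonalTuple 3 (l - 1),
          ohno m (List.replicate (f 0) 2 ++ [s + 1] ++ List.replicate (f 1) 2 ++
            List.replicate (t - 1) 1 ++ List.replicate (f 2 + 1) 2) := by
  have h := congrArg (ohnoL m) (shuf_dualL_sub_hast_dualL s t l (by omega) (by omega) hl)
  simpa only [ohnoL_eq_linearCombination, map_sub, map_add, map_sum, linearCombination_ofIdx]
    using h
end
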